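/- Let L be a normal incline and let A be a 2×2 completely positive matrix over L. Then A is both LU-completely positive and UL-completely positive: there exist a 2×2 lower triangular matrix C over L with A = C * Cᵀ and a 2×2 upper triangular matrix U over L with A = U * Uᵀ. -/

import Mathlib

/-!
Write `A = B * Bᵀ` with entries `a = A 0 0`, `b = A 0 1`, `d = A 1 1`. In an idempotent semiring
the AG-property yields Cauchy–Schwarz `b * b ≤ a * d`: every cross term
`(xᵢ yᵢ)(xⱼ yⱼ) = (xᵢ yⱼ)(xⱼ yᵢ)` is dominated by `(xᵢ yⱼ)² + (xⱼ yᵢ)²`. Taking square roots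
`p² = a`, `q² = d`, the AG-property and idempotence give `(b + pq)² = (pq)²`, so `b ≤ pq` by
uniqueness of square roots, and the LI-property writes `b = pqw`. Since absorption means that every
element is `≤ 1`, the triangular matrices `!![p, 0; qw, q]` and `!![p, pw; 0, q]` both factor `A`.
-/

open Matrix

namespace Incline

variable {L : Type*} [IdemCommSemiring L]

theorem mul_self_sum_mul_le {ι : Type*} (hAG : ∀ a b : L, a * b ≤ a * a + b * b)
    (s : Finset ι) (x y : ι → L) :
    (∑ i ∈ s, x i * y i) * (∑ i ∈ s, x i * y i) ≤
      (∑ i ∈ s, x i * x i) * (∑ i ∈ s, y i * y i) := by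
  set R := ∑ i ∈ s, ∑ j ∈ s, x i * x i * (y j * y j)
  calc (∑ i ∈ s, x i * y i) * (∑ i ∈ s, x i * y i)
      = ∑ i ∈ s, ∑ j ∈ s, (x i * y j) * (x j * y i) := by
        rw [Finset.sum_mul_sum]
        exact Finset.sum_congr rfl fun i _ => Finset.sum_congr rfl fun j _ => by ring
    _ ≤ ∑ i ∈ s, ∑ j ∈ s, ((x i * y j) * (x i * y j) + (x j * y i) * (x j * y i)) :=
        Finset.sum_le_sum fun i _ => Finset.sum_le_sum fun j _ => hAG _ _
    _ = R + ∑ j ∈ s, ∑ i ∈ s, x j * x j * (y i * y i) := by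
        simp only [Finset.sum_add_distrib]
        rw [Finset.sum_comm (f := fun i j => x j * y i * (x j * y i))]
        congr 1 <;> exact Finset.sum_congr rfl fun i _ => Finset.sum_congr rfl fun j _ => by ring
    _ = (∑ i ∈ s, x i * x i) * (∑ i ∈ s, y i * y i) := by
        rw [add_idem, Finset.sum_mul_sum]

theorem mul_transpose_self_apply_mul_self_le {m n : Type*} [Fintype m]
    (hAG : ∀ a b : L, a * b ≤ a * a + b * b) (B : Matrix n m L) (i j : n) :
    (B * Bᵀ) i j * (B * Bᵀ) i j ≤ (B * Bᵀ) i i * (B * Bᵀ) j j := by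
  simpa only [mul_apply, transpose_apply] using mul_self_sum_mul_le hAG Finset.univ (B i) (B j)

theorem le_of_mul_self_le_mul_self (hAG : ∀ a b : L, a * b ≤ a * a + b * b)
    (hinj : Function.Injective fun c : L => c * c) {b t : L} (h : b * b ≤ t * t) : b ≤ t := by
  have hbt : b * t ≤ t * t := (hAG b t).trans (add_le h le_rfl)
  have hsq : (b + t) * (b + t) = t * t := by
    calc (b + t) * (b + t) = b * b + (b * t + b * t) + t * t := by ring
      _ = t * t := by rw [add_idem, add_eq_right_iff_le]; exact add_le h hbt
  exact add_eq_right_iff_le.1 (hinj hsq)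

theorem eq_lower_mul_transpose (hle_one : ∀ a : L, a ≤ 1) {A : Matrix (Fin 2) (Fin 2) L}
    (hA : A.IsSymm) {p q w : L} (hp : p * p = A 0 0) (hq : q * q = A 1 1)
    (hw : A 0 1 = p * q * w) : A = !![p, 0; q * w, q] * !![p, 0; q * w, q]ᵀ := by
  have hq' : q * w * (q * w) + q * q = q * q := by
    rw [add_eq_right_iff_le, mul_mul_mul_comm]; exact mul_le_of_le_one_right' (hle_one _)
  rw [eta_fin_two A, hA.apply 0 1, hw, ← hp, ← hq]
  ext i j; fin_cases i <;> fin_cases j <;> simp [mul_apply, Fin.sum_univ_two, hq'] <;> ring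

theorem eq_upper_mul_transpose (hle_one : ∀ a : L, a ≤ 1) {A : Matrix (Fin 2) (Fin 2) L}
    (hA : A.IsSymm) {p q w : L} (hp : p * p = A 0 0) (hq : q * q = A 1 1)
    (hw : A 0 1 = p * q * w) : A = !![p, p * w; 0, q] * !![p, p * w; 0, q]ᵀ := by
  have hp' : p * p + p * w * (p * w) = p * p := by
    rw [add_eq_left_iff_le, mul_mul_mul_comm]; exact mul_le_of_le_one_right' (hle_one _)
  rw [eta_fin_two A, hA.apply 0 1, hw, ← hp, ← hq]
  ext i j; fin_cases i <;> fin_cases j <;> simp [mul_apply, Fin.sum_univ_two, hp'] <;> ring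

theorem exists_lower_and_upper_factors (hle_one : ∀ a : L, a ≤ 1)
    (hAG : ∀ a b : L, a * b ≤ a * a + b * b) (hLI : ∀ a b : L, a ≤ b → ∃ c, a = b * c)
    (hsqrt : ∀ a : L, ∃ c, c * c = a) (hinj : Function.Injective fun c : L => c * c)
    {A : Matrix (Fin 2) (Fin 2) L} (hA : A.IsSymm) (hdet : A 0 1 * A 0 1 ≤ A 0 0 * A 1 1) :
    (∃ C : Matrix (Fin 2) (Fin 2) L, (∀ i j : Fin 2, i < j → C i j = 0) ∧ A = C * Cᵀ) ∧
    (∃ U : Matrix (Fin 2) (Fin 2) L, (∀ i j : Fin 2, j < i → U i j = 0) ∧ A = U * Uᵀ) := by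
  obtain ⟨p, hp⟩ := hsqrt (A 0 0)
  obtain ⟨q, hq⟩ := hsqrt (A 1 1)
  have hb : A 0 1 ≤ p * q :=
    le_of_mul_self_le_mul_self hAG hinj <| by rwa [mul_mul_mul_comm, hp, hq]
  obtain ⟨w, hw⟩ := hLI _ _ hb
  refine ⟨⟨_, ?_, eq_lower_mul_transpose hle_one hA hp hq hw⟩,
    ⟨_, ?_, eq_upper_mul_transpose hle_one hA hp hq hw⟩⟩ <;>
  · intro i j hij
    fin_cases i <;> fin_cases j <;> simp_all

end Incline

theorem stmt_18_general {L : Type*} [CommSemiring L]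
    (habs : ∀ a b : L, a + a * b = a)
    (hLI : ∀ x y : L, x + y = y → ∃ z : L, x = y * z)
    (hsq : ∀ x : L, ∃! c : L, c * c = x)
    (hAG : ∀ x y : L, x * y + (x * x + y * y) = x * x + y * y)
    (A : Matrix (Fin 2) (Fin 2) L)
    (hcp : ∃ m : ℕ, ∃ B : Matrix (Fin 2) (Fin m) L, A = B * Bᵀ) :
    (∃ C : Matrix (Fin 2) (Fin 2) L, (∀ i j : Fin 2, i < j → C i j = 0) ∧
        A = C * Cᵀ) ∧
    (∃ U : Matrix (Fin 2) (Fin 2) L, (∀ i j : Fin 2, j < i → U i j = 0) ∧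
        A = U * Uᵀ) := by
  obtain ⟨m, B, rfl⟩ := hcp
  have hA : (B * Bᵀ).IsSymm := transpose_mul _ _
  -- The order of `IdemSemiring.ofSemiring` is `x ≤ y ↔ x + y = y`, so `hAG` and `hLI` are
  -- literally statements about it.
  let : IdemCommSemiring L :=
    { ‹CommSemiring L›, IdemSemiring.ofSemiring fun a => by simpa using habs a 1 with }
  have hle_one (a : L) : a ≤ 1 := show a + 1 = 1 by simpa [add_comm] using habs 1 a
  exact Incline.exists_lower_and_upper_factors hle_one hAG hLI (fun a => (hsq a).exists)
    (fun a b h => (hsq (a * a)).unique rfl h.symm) hA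
    (Incline.mul_transpose_self_apply_mul_self_le hAG B 0 1)

/-- Every 2×2 completely positive matrix over a normal incline is
both LU-completely positive and UL-completely positive. -/
theorem stmt_18 {L : Type*} [CommSemiring L]
    (hidem : ∀ a : L, a + a = a)
    (habs : ∀ a b : L, a + a * b = a)
    (hLI : ∀ x y : L, x + y = y → ∃ z : L, x = y * z)
    (hsq : ∀ x : L, ∃! c : L, c * c = x)
    (hAG : ∀ x y : L, x * y + (x * x + y * y) = x * x + y * y)
    (A : Matrix (Fin 2) (Fin 2) L)
    (hcp : ∃ m : ℕ, ∃ B : Matrix (Fin 2) (Fin m) L, A = B * Bᵀ) :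
    (∃ C : Matrix (Fin 2) (Fin 2) L, (∀ i j : Fin 2, i < j → C i j = 0) ∧
        A = C * Cᵀ) ∧
    (∃ U : Matrix (Fin 2) (Fin 2) L, (∀ i j : Fin 2, j < i → U i j = 0) ∧
        A = U * Uᵀ) :=
  stmt_18_general habs hLI hsq hAG A hcp
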